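/- arXiv:2403.02433 — 2 statements merged into one kernel-verified Lean document; each statement's English description precedes it below -/
import Mathlib

section
/- The map P ↦ gen_P is injective on 𝒫_N: if P and P' both belong to 𝒫_N and their induced generation functions coincide (gen_P(i) = gen_{P'}(i) for all i ∈ [N]), then P = P'. Equivalently, any function g : [N] → ℕ is the generation function of at most one element of 𝒫_N. -/
/-- `P : ℕ → ℕ` represents a parent function on `[N] = {1, …, N}` (only the
values on `[N]` are relevant): `i < P(i) ≤ N` for `1 ≤ i ≤ N - 1` and `P(N) = N`. -/
def IsParentFn (N : ℕ) (P : ℕ → ℕ) : Prop :=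
  (∀ i, 1 ≤ i → i < N → i < P i ∧ P i ≤ N) ∧ P N = N

/-- Condition (P3): for every pair `1 ≤ i < j ≤ N`, if `j < P(i)` then `P(j) ≤ P(i)`. -/
def CondP3 (N : ℕ) (P : ℕ → ℕ) : Prop :=
  ∀ i j, 1 ≤ i → i < j → j ≤ N → j < P i → P j ≤ P i

/-- `g` is the generation function of the parent function `P` on `[N]`:
`g(N) = 0` and `g(i) = g(P(i)) + 1` for `1 ≤ i ≤ N - 1`. -/
def IsGenFn (N : ℕ) (P g : ℕ → ℕ) : Prop :=
  g N = 0 ∧ ∀ i, 1 ≤ i → i < N → g i = g (P i) + 1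

/-- Key lemma: for any `j` with `i < j < P i`, we have `g i ≤ g j`. -/
lemma gen_ge_of_lt_parent (N : ℕ) (P g : ℕ → ℕ)
    (hP : IsParentFn N P) (hP3 : CondP3 N P) (hg : IsGenFn N P g)
    (i : ℕ) (hi : 1 ≤ i) (hiN : i < N) :
    ∀ j, i < j → j < P i → g i ≤ g j := by
  have hPiN : P i ≤ N := (hP.1 i hi hiN).2
  have hgi : g i = g (P i) + 1 := hg.2 i hi hiN
  have key : ∀ k j, P i - j ≤ k → i < j → j < P i → g i ≤ g j := by
    intro k
    induction k with
    | zero => intro j h1 h2 h3; omega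
    | succ k ih =>
      intro j h1 h2 h3
      have hj1 : 1 ≤ j := by omega
      have hjN : j < N := by omega
      have hPj := hP.1 j hj1 hjN
      have hle : P j ≤ P i := hP3 i j hi h2 (by omega) h3
      have hgj : g j = g (P j) + 1 := hg.2 j hj1 hjN
      rcases eq_or_lt_of_le hle with he | hlt
      · rw [hgj, he]; omega
      · have := ih (P j) (by omega) (by omega) hlt
        omega
  exact fun j h2 h3 => key (P i - j) j le_rfl h2 h3

/-- The map `P ↦ gen_P` is injective on `𝒫_N`: if `P, P' ∈ 𝒫_N` have the same
generation function on `[N]`, then `P = P'` on `[N]`. -/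
theorem parentFn_injective_of_genFn (N : ℕ) (hN : 1 ≤ N) (P P' g g' : ℕ → ℕ)
    (hP : IsParentFn N P) (hP3 : CondP3 N P)
    (hP' : IsParentFn N P') (hP3' : CondP3 N P')
    (hg : IsGenFn N P g) (hg' : IsGenFn N P' g')
    (heq : ∀ i, 1 ≤ i → i ≤ N → g i = g' i) :
    ∀ i, 1 ≤ i → i ≤ N → P i = P' i := by
  intro i hi hiN
  rcases eq_or_lt_of_le hiN with h | hlt
  · subst h; rw [hP.2, hP'.2]
  -- both P i and P' i are in (i, N]
  have hPi := hP.1 i hi hlt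
  have hPi' := hP'.1 i hi hlt
  have hgi : g i = g (P i) + 1 := hg.2 i hi hlt
  have hgi' : g' i = g' (P' i) + 1 := hg'.2 i hi hlt
  by_contra hne
  rcases Nat.lt_or_ge (P i) (P' i) with hlt2 | hge
  · -- P i < P' i : apply key lemma to P' at j = P i
    have h1 : g' i ≤ g' (P i) :=
      gen_ge_of_lt_parent N P' g' hP' hP3' hg' i hi hlt (P i) hPi.1 hlt2
    have e1 : g i = g' i := heq i hi hiN
    have e2 : g (P i) = g' (P i) := heq (P i) (by omega) hPi.2
    omega
  · have hlt2 : P' i < P i := by omega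
    have h1 : g i ≤ g (P' i) :=
      gen_ge_of_lt_parent N P g hP hP3 hg i hi hlt (P' i) hPi'.1 hlt2
    have e1 : g i = g' i := heq i hi hiN
    have e2 : g (P' i) = g' (P' i) := heq (P' i) (by omega) hPi'.2
    omega
end

section
/- Let P ∈ 𝒫_N and let 1 ≤ i < j ≤ N be consecutive children of the same parent, i.e. P(i) = P(j) and P(k) ≠ P(i) for all k with i < k < j. Then P maps the set {i+1, …, j−1} into {i+2, …, j}, and the function Q on {i+1, …, j} defined by Q(k) = P(k) for i+1 ≤ k ≤ j−1 and Q(j) = j, after relabeling the indices via k ↦ k − i, is a parent function on [j−i] satisfying condition (P3); that is, Q corresponds to an element of 𝒫_{j−i}. -/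
/-- If `P ∈ 𝒫_N` and `i < j` are consecutive children of the same parent
(`P(i) = P(j)` and `P(k) ≠ P(i)` for `i < k < j`), then `P` maps `{i+1, …, j-1}`
into `{i+2, …, j}`, and the function `Q` on `{i+1, …, j}` given by `Q(k) = P(k)`
for `i+1 ≤ k ≤ j-1` and `Q(j) = j`, relabeled via `k ↦ k - i`, is an element of
`𝒫_{j-i}`. -/
theorem consecutive_children_subtree (N : ℕ) (hN : 1 ≤ N) (P : ℕ → ℕ)
    (hP : IsParentFn N P) (hP3 : CondP3 N P)
    (i j : ℕ) (hi : 1 ≤ i) (hij : i < j) (hjN : j ≤ N)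
    (hsame : P i = P j) (hcons : ∀ k, i < k → k < j → P k ≠ P i) :
    (∀ k, i < k → k < j → i + 1 < P k ∧ P k ≤ j) ∧
    ∃ Q : ℕ → ℕ, IsParentFn (j - i) Q ∧ CondP3 (j - i) Q ∧
      ∀ k, 1 ≤ k → k < j - i → Q k = P (k + i) - i := by
  obtain ⟨hPdom, hPN⟩ := hP
  have hPj : j ≤ P j := by
    rcases eq_or_lt_of_le hjN with h | h
    · rw [h, hPN]
    · exact le_of_lt (hPdom j (by omega) h).1
  have hmap : ∀ k, i < k → k < j → i + 1 < P k ∧ P k ≤ j := by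
    intro k hk1 hk2
    have hkPk := (hPdom k (by omega) (by omega)).1
    have hkPi : k < P i := by omega
    have h1 : P k ≤ P i := hP3 i k hi hk1 (by omega) hkPi
    have hne := hcons k hk1 hk2
    constructor
    · omega
    · by_contra hcon
      have hjPk : j < P k := by omega
      have := hP3 k j (by omega) hk2 hjN hjPk
      omega
  refine ⟨hmap, fun k => if k + i < j then P (k + i) - i else j - i, ?_, ?_, ?_⟩
  · constructor
    · intro a ha haj
      have hlt : a + i < j := by omega
      simp only [if_pos hlt]
      have h1 := hmap (a + i) (by omega) hlt
      have h2 := (hPdom (a + i) (by omega) (by omega)).1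
      omega
    · have : ¬ (j - i + i < j) := by omega
      simp only [if_neg this]
  · intro a b ha hab hb hbQ
    have haj : a + i < j := by omega
    simp only [if_pos haj] at hbQ ⊢
    have hma := hmap (a + i) (by omega) haj
    rcases lt_or_ge (b + i) j with hbj | hbj
    · simp only [if_pos hbj]
      have hmb := hmap (b + i) (by omega) hbj
      have := hP3 (a + i) (b + i) (by omega) (by omega) (by omega) (by omega)
      omega
    · omega
  · intro k hk hkj
    have : k + i < j := by omega
    simp only [if_pos this]
end
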